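/- arXiv:1406.1822 — 5 statements merged into one kernel-verified Lean document; each statement's English description precedes it below -/
import Mathlib

section
/- Let k ≥ 1, let π : Fin k → ℝ be nonnegative with ∑ π i = 1, and let P : Fin k → ℝ satisfy 0 ≤ P i ≤ 1 for all i. Define β = ∑ π i * P i, J = 2 * ∑ π i * |P i - β|, and α = ∑ π i * min (P i) (1 - P i). If 0 < β ≤ 1/2, then J ≤ 2 - 4*β^2 - 4*β*α, equivalently α ≤ (2 - J)/(4β) - β. -/
theorem purity_balance_bound (k : ℕ) (hk : 1 ≤ k)
    (π P : Fin k → ℝ) (hπ : ∀ i, 0 ≤ π i) (hπsum : ∑ i, π i = 1)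
    (hP0 : ∀ i, 0 ≤ P i) (hP1 : ∀ i, P i ≤ 1)
    (β J α : ℝ)
    (hβ : β = ∑ i, π i * P i)
    (hJ : J = 2 * ∑ i, π i * |P i - β|)
    (hα : α = ∑ i, π i * min (P i) (1 - P i))
    (hβpos : 0 < β) (hβhalf : β ≤ 1 / 2) :
    J ≤ 2 - 4 * β ^ 2 - 4 * β * α ∧ α ≤ (2 - J) / (4 * β) - β := by
  have key : ∀ i, π i * |P i - β| ≤ π i * (1 - 2*β^2 - 2*β*min (P i) (1 - P i)) := by
    intro i
    apply mul_le_mul_of_nonneg_left _ (hπ i)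
    rcases le_total (P i) (1 - P i) with h | h
    · rw [min_eq_left h]
      rcases abs_cases (P i - β) with ⟨he, _⟩ | ⟨he, _⟩ <;> rw [he] <;>
        nlinarith [hP0 i, hP1 i]
    · rw [min_eq_right h]
      rcases abs_cases (P i - β) with ⟨he, _⟩ | ⟨he, _⟩ <;> rw [he] <;>
        nlinarith [hP0 i, hP1 i]
  have heq : ∑ i, π i * (1 - 2*β^2 - 2*β*min (P i) (1 - P i))
      = (1 - 2*β^2) * (∑ i, π i) - 2*β * (∑ i, π i * min (P i) (1 - P i)) := by
    rw [Finset.mul_sum, Finset.mul_sum, ← Finset.sum_sub_distrib]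
    apply Finset.sum_congr rfl
    intro i _
    ring
  have hsum : ∑ i, π i * |P i - β| ≤ 1 - 2*β^2 - 2*β*α := by
    calc ∑ i, π i * |P i - β| ≤ ∑ i, π i * (1 - 2*β^2 - 2*β*min (P i) (1 - P i)) :=
          Finset.sum_le_sum fun i _ => key i
      _ = 1 - 2*β^2 - 2*β*α := by rw [heq, hπsum, ← hα]; ring
  have h1 : J ≤ 2 - 4 * β ^ 2 - 4 * β * α := by rw [hJ]; linarith
  refine ⟨h1, ?_⟩
  rw [le_sub_iff_add_le, le_div_iff₀ (by linarith : (0:ℝ) < 4 * β)]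
  nlinarith
end

section
/- Let k ≥ 1, π : Fin k → ℝ nonnegative with ∑ π i = 1, P : Fin k → ℝ with 0 ≤ P i ≤ 1, β = ∑ π i P i, and J = 2 ∑ π i |P i - β|. If J = 1 then β (1 - β) ≥ 1/4, hence β = 1/2. -/
set_option maxHeartbeats 1000000 in
theorem objective_one_forces_balance (k : ℕ) (hk : 1 ≤ k)
    (π P : Fin k → ℝ) (hπ : ∀ i, 0 ≤ π i) (hπsum : ∑ i, π i = 1)
    (hP0 : ∀ i, 0 ≤ P i) (hP1 : ∀ i, P i ≤ 1)
    (β : ℝ) (hβ : β = ∑ i, π i * P i)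
    (hJ : 2 * ∑ i, π i * |P i - β| = 1) :
    β * (1 - β) ≥ 1 / 4 ∧ β = 1 / 2 := by
  classical
  set A := Finset.univ.filter (fun i => β ≤ P i) with hA
  set B := Finset.univ.filter (fun i => ¬ β ≤ P i) with hB
  set a := ∑ i ∈ A, π i with ha
  have hab : a + ∑ i ∈ B, π i = 1 := by
    rw [ha, hA, hB, Finset.sum_filter_add_sum_filter_not, hπsum]
  have ha0 : 0 ≤ a := Finset.sum_nonneg (fun i _ => hπ i)
  have hb0 : 0 ≤ ∑ i ∈ B, π i := Finset.sum_nonneg (fun i _ => hπ i)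
  have hsplit : ∑ i, π i * |P i - β|
      = ∑ i ∈ A, π i * (P i - β) + ∑ i ∈ B, π i * (β - P i) := by
    rw [← Finset.sum_filter_add_sum_filter_not Finset.univ (fun i => β ≤ P i)
      (fun i => π i * |P i - β|)]
    congr 1
    · exact Finset.sum_congr rfl (fun i hi => by
        rw [abs_of_nonneg (by simp [hA] at hi; linarith)])
    · exact Finset.sum_congr rfl (fun i hi => by
        simp [hB] at hi
        rw [abs_of_neg (by linarith)]; ring)
  have hmean : ∑ i ∈ A, π i * (P i - β) - ∑ i ∈ B, π i * (β - P i) = 0 := by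
    have : ∑ i ∈ A, π i * (P i - β) - ∑ i ∈ B, π i * (β - P i)
        = ∑ i, π i * (P i - β) := by
      rw [← Finset.sum_filter_add_sum_filter_not Finset.univ (fun i => β ≤ P i)
        (fun i => π i * (P i - β))]
      have : ∑ i ∈ B, π i * (β - P i) = - ∑ i ∈ B, π i * (P i - β) := by
        rw [← Finset.sum_neg_distrib]; exact Finset.sum_congr rfl (fun i _ => by ring)
      rw [this]; ring
    rw [this]
    have : ∑ i, π i * (P i - β) = ∑ i, π i * P i - β * ∑ i, π i := by
      rw [Finset.mul_sum, ← Finset.sum_sub_distrib]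
      exact Finset.sum_congr rfl (fun i _ => by ring)
    rw [this, hπsum, hβ]; ring
  have hJ' : ∑ i ∈ A, π i * (P i - β) + ∑ i ∈ B, π i * (β - P i) = 1 / 2 := by
    rw [← hsplit]; linarith
  have hSA : ∑ i ∈ A, π i * (P i - β) = 1 / 4 := by linarith
  have hSB : ∑ i ∈ B, π i * (β - P i) = 1 / 4 := by linarith
  have hbA : ∑ i ∈ A, π i * (P i - β) ≤ a * (1 - β) := by
    rw [ha, Finset.sum_mul]
    exact Finset.sum_le_sum (fun i hi =>
      mul_le_mul_of_nonneg_left (by linarith [hP1 i]) (hπ i))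
  have hbB : ∑ i ∈ B, π i * (β - P i) ≤ (∑ i ∈ B, π i) * β := by
    rw [Finset.sum_mul]
    exact Finset.sum_le_sum (fun i hi =>
      mul_le_mul_of_nonneg_left (by linarith [hP0 i]) (hπ i))
  have h1 : (1:ℝ)/4 ≤ a * (1 - β) := by linarith
  have h2 : (1:ℝ)/4 ≤ (1 - a) * β := by
    have : ∑ i ∈ B, π i = 1 - a := by linarith
    rw [← this]; linarith
  have ha1 : a ≤ 1 := by linarith
  have hβhi : β ≤ 3/4 := by nlinarith
  have hβlo : 1/4 ≤ β := by nlinarith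
  have hββ : 0 ≤ β * (1 - β) := by nlinarith
  have hprod : (1:ℝ)/4 * (1/4) ≤ (a * (1 - β)) * ((1 - a) * β) :=
    mul_le_mul h1 h2 (by norm_num) (by linarith)
  have hkey : 0 ≤ (1/4 - a * (1 - a)) * (β * (1 - β)) :=
    mul_nonneg (by nlinarith [sq_nonneg (a - 1/2)]) hββ
  have hge : β * (1 - β) ≥ 1 / 4 := by nlinarith
  exact ⟨hge, by nlinarith [sq_nonneg (2*β - 1)]⟩
end

section
/- Let π₀, π₁ : Fin k → ℝ be probability vectors (nonnegative, summing to 1), let β ∈ (0,1), and let π = fun i => (1-β) * π₀ i + β * π₁ i. Let H(q) = ∑ i, negMulLog (q i) denote Shannon entropy. Then H(π) - (1-β) * H(π₀) - β * H(π₁) ≥ β * (1-β) * (∑ i, |π₀ i - π₁ i|)^2 / 2. -/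
/-!
The entropy gap of the split equals `(1 - β) KL(π₀ ‖ π) + β KL(π₁ ‖ π)`, pointwise in each
class. Both children are at ℓ₁ distance `β ‖π₀ - π₁‖₁` resp. `(1 - β) ‖π₀ - π₁‖₁` from `π`, so
Pinsker's inequality `‖p - q‖₁² ≤ 2 KL(p ‖ q)` bounds the gap below by
`β (1 - β) (β + (1 - β)) ‖π₀ - π₁‖₁² / 2`.

Pinsker's inequality follows from Cauchy–Schwarz with weights `(p + 2q) / 3` and the scalar bound
`3 (x - 1)² ≤ 2 (x + 2) klFun x` for `x ≥ 0`. For the latter, the difference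
`klFun x - 3 (x - 1)² / (2 (x + 2))` has second derivative `1 / x - 27 / (x + 2)³ ≥ 0`
(AM–GM: `(x + 1 + 1)³ ≥ 27 x`), so it is convex with a double zero at `1`.
-/

open Real InformationTheory Set

-- `3 / 2 * (x - 4) + 27 / 2 * (x + 2)⁻¹ = 3 * (x - 1) ^ 2 / (2 * (x + 2))`
lemma hasDerivAt_klFun_sub_rat {x : ℝ} (hx : 0 < x) :
    HasDerivAt (fun x => klFun x - 3 / 2 * (x - 4) - 27 / 2 * (x + 2)⁻¹)
      (log x - 3 / 2 + 27 / 2 * ((x + 2) ^ 2)⁻¹) x :=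
  (((hasDerivAt_klFun hx.ne').fun_sub (((hasDerivAt_id' x).sub_const 4).const_mul (3 / 2))).fun_sub
    ((((hasDerivAt_id' x).add_const 2).fun_inv (by positivity)).const_mul (27 / 2))).congr_deriv
    (by ring)

lemma hasDerivAt_log_add_rat {x : ℝ} (hx : 0 < x) :
    HasDerivAt (fun x => log x - 3 / 2 + 27 / 2 * ((x + 2) ^ 2)⁻¹)
      (x⁻¹ - 27 * ((x + 2) ^ 3)⁻¹) x :=
  (((hasDerivAt_log hx.ne').sub_const (3 / 2)).fun_add
    (((((hasDerivAt_id' x).add_const 2).fun_pow 2).fun_inv (by positivity)).const_mul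
      (27 / 2))).congr_deriv (by field_simp; ring)

lemma convexOn_klFun_sub_rat :
    ConvexOn ℝ (Ici 0) (fun x => klFun x - 3 / 2 * (x - 4) - 27 / 2 * (x + 2)⁻¹) := by
  refine convexOn_of_hasDerivWithinAt2_nonneg (convex_Ici 0) ?_
    (fun x hx => (hasDerivAt_klFun_sub_rat (interior_Ici.subset hx)).hasDerivWithinAt)
    (fun x hx => (hasDerivAt_log_add_rat (interior_Ici.subset hx)).hasDerivWithinAt) ?_
  · have : ∀ x ∈ Ici (0 : ℝ), x + 2 ≠ 0 := fun x hx => by simp only [mem_Ici] at hx; positivity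
    fun_prop (disch := assumption)
  · intro x hx
    have hx : 0 < x := interior_Ici.subset hx
    rw [sub_nonneg, ← div_eq_mul_inv, inv_eq_one_div, div_le_div_iff₀ (by positivity) hx]
    nlinarith [mul_nonneg (sq_nonneg (x - 1)) hx.le]

theorem three_mul_sub_one_sq_le_mul_klFun {x : ℝ} (hx : 0 ≤ x) :
    3 * (x - 1) ^ 2 ≤ 2 * (x + 2) * klFun x := by
  have hmin := convexOn_klFun_sub_rat.isMinOn_of_rightDeriv_eq_zero (x := 1) (by simp) (by
    rw [(hasDerivAt_klFun_sub_rat one_pos).hasDerivWithinAt.derivWithin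
      (uniqueDiffWithinAt_Ioi 1)]
    norm_num)
  have h := hmin (mem_Ici.2 hx)
  norm_num [klFun_one] at h
  have hx2 : 0 < x + 2 := by positivity
  field_simp at h
  nlinarith

theorem three_mul_sub_sq_le_mul_klFun_div {p q : ℝ} (hp : 0 ≤ p) (hq : 0 ≤ q)
    (hpq : q = 0 → p = 0) : 3 * (p - q) ^ 2 ≤ 2 * (p + 2 * q) * (q * klFun (p / q)) := by
  rcases hq.eq_or_lt with rfl | hq
  · simp [hpq rfl]
  calc 3 * (p - q) ^ 2 = q ^ 2 * (3 * (p / q - 1) ^ 2) := by field_simp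
    _ ≤ q ^ 2 * (2 * (p / q + 2) * klFun (p / q)) :=
      mul_le_mul_of_nonneg_left (three_mul_sub_one_sq_le_mul_klFun (div_nonneg hp hq.le))
        (sq_nonneg q)
    _ = 2 * (p + 2 * q) * (q * klFun (p / q)) := by field_simp

theorem negMulLog_mix_sub_eq {a b β m : ℝ} (ha : 0 ≤ a) (hb : 0 ≤ b) (hβ0 : 0 ≤ β) (hβ1 : β ≤ 1)
    (hm : (1 - β) * a + β * b = m) :
    negMulLog m - (1 - β) * negMulLog a - β * negMulLog b =
      (1 - β) * (m * klFun (a / m)) + β * (m * klFun (b / m)) := by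
  rcases eq_or_ne m 0 with rfl | hm0
  · have ha0 : (1 - β) * a = 0 := by
      nlinarith [mul_nonneg (sub_nonneg.2 hβ1) ha, mul_nonneg hβ0 hb]
    have hb0 : β * b = 0 := by nlinarith [mul_nonneg (sub_nonneg.2 hβ1) ha, mul_nonneg hβ0 hb]
    simp only [negMulLog, zero_mul, mul_zero, add_zero]
    linear_combination log a * ha0 + log b * hb0
  · obtain ⟨x, rfl⟩ : ∃ x, a = m * x := ⟨a / m, by field_simp⟩
    obtain ⟨y, rfl⟩ : ∃ y, b = m * y := ⟨b / m, by field_simp⟩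
    have hsum : (1 - β) * x + β * y = 1 := mul_left_cancel₀ hm0 (by linear_combination hm)
    rw [mul_div_cancel_left₀ x hm0, mul_div_cancel_left₀ y hm0, negMulLog_mul, negMulLog_mul]
    simp only [klFun, negMulLog]
    linear_combination (m * log m + m) * hsum

section FiniteDistributions

variable {ι : Type*} [Fintype ι]

/-- `q i * klFun (p i / q i) = p i * log (p i / q i) - p i + q i`, except that the term is `0`
whenever `q i = 0`: this is the Kullback–Leibler divergence only when `p ≪ q`. -/
noncomputable def finKLDiv (p q : ι → ℝ) : ℝ := ∑ i, q i * klFun (p i / q i)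

theorem sq_sum_abs_sub_le_two_mul_finKLDiv {p q : ι → ℝ} (hp : ∀ i, 0 ≤ p i)
    (hq : ∀ i, 0 ≤ q i) (hp_sum : ∑ i, p i = 1) (hq_sum : ∑ i, q i = 1)
    (hpq : ∀ i, q i = 0 → p i = 0) :
    (∑ i, |p i - q i|) ^ 2 ≤ 2 * finKLDiv p q := by
  have hw : ∑ i, (p i + 2 * q i) / 3 = 1 := by
    rw [← Finset.sum_div, Finset.sum_add_distrib, ← Finset.mul_sum, hp_sum, hq_sum]
    norm_num
  have h := Finset.sum_sq_le_sum_mul_sum_of_sq_le_mul Finset.univ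
    (r := fun i => |p i - q i|) (f := fun i => 2 * (q i * klFun (p i / q i)))
    (g := fun i => (p i + 2 * q i) / 3)
    (fun i _ => mul_nonneg zero_le_two
      (mul_nonneg (hq i) (klFun_nonneg (div_nonneg (hp i) (hq i)))))
    (fun i _ => by have := hp i; have := hq i; positivity)
    (fun i _ => by
      have := three_mul_sub_sq_le_mul_klFun_div (hp i) (hq i) (hpq i)
      rw [sq_abs]
      linarith)
  rwa [hw, mul_one, ← Finset.mul_sum] at h

theorem sum_negMulLog_mix_sub_eq {p q : ι → ℝ} (hp : ∀ i, 0 ≤ p i) (hq : ∀ i, 0 ≤ q i) {β : ℝ}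
    (hβ0 : 0 ≤ β) (hβ1 : β ≤ 1) :
    ∑ i, negMulLog ((1 - β) * p i + β * q i) - (1 - β) * ∑ i, negMulLog (p i)
        - β * ∑ i, negMulLog (q i) =
      (1 - β) * finKLDiv p (fun i => (1 - β) * p i + β * q i) +
        β * finKLDiv q (fun i => (1 - β) * p i + β * q i) := by
  simp only [finKLDiv, Finset.mul_sum, ← Finset.sum_sub_distrib, ← Finset.sum_add_distrib]
  exact Finset.sum_congr rfl fun i _ => negMulLog_mix_sub_eq (hp i) (hq i) hβ0 hβ1 rfl

end FiniteDistributions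

theorem entropy_strong_concavity_gap (k : ℕ)
    (π₀ π₁ : Fin k → ℝ)
    (h₀ : ∀ i, 0 ≤ π₀ i) (h₀sum : ∑ i, π₀ i = 1)
    (h₁ : ∀ i, 0 ≤ π₁ i) (h₁sum : ∑ i, π₁ i = 1)
    (β : ℝ) (hβ0 : 0 < β) (hβ1 : β < 1) :
    β * (1 - β) * (∑ i, |π₀ i - π₁ i|) ^ 2 / 2 ≤
      (∑ i, Real.negMulLog ((1 - β) * π₀ i + β * π₁ i))
        - (1 - β) * (∑ i, Real.negMulLog (π₀ i))
        - β * (∑ i, Real.negMulLog (π₁ i)) := by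
  set m : Fin k → ℝ := fun i => (1 - β) * π₀ i + β * π₁ i
  have hm : ∀ i, 0 ≤ m i := fun i => by
    have := h₀ i; have := h₁ i; have := hβ1.le; positivity
  have hm_sum : ∑ i, m i = 1 := by
    simp only [m, Finset.sum_add_distrib, ← Finset.mul_sum, h₀sum, h₁sum]
    ring
  have hm₀ : ∀ i, m i = 0 → π₀ i = 0 := fun i hi => by nlinarith [h₀ i, h₁ i]
  have hm₁ : ∀ i, m i = 0 → π₁ i = 0 := fun i hi => by nlinarith [h₀ i, h₁ i]
  have hdist₀ : ∑ i, |π₀ i - m i| = β * ∑ i, |π₀ i - π₁ i| := by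
    simp only [m, show ∀ i, π₀ i - ((1 - β) * π₀ i + β * π₁ i) = β * (π₀ i - π₁ i) from
      fun i => by ring, abs_mul, abs_of_pos hβ0, Finset.mul_sum]
  have hdist₁ : ∑ i, |π₁ i - m i| = (1 - β) * ∑ i, |π₀ i - π₁ i| := by
    simp only [m, show ∀ i, π₁ i - ((1 - β) * π₀ i + β * π₁ i) = (1 - β) * (π₁ i - π₀ i) from
      fun i => by ring, abs_mul, abs_of_pos (sub_pos.2 hβ1), abs_sub_comm, Finset.mul_sum]
  have hKL₀ := sq_sum_abs_sub_le_two_mul_finKLDiv h₀ hm h₀sum hm_sum hm₀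
  have hKL₁ := sq_sum_abs_sub_le_two_mul_finKLDiv h₁ hm h₁sum hm_sum hm₁
  rw [hdist₀] at hKL₀
  rw [hdist₁] at hKL₁
  rw [sum_negMulLog_mix_sub_eq h₀ h₁ hβ0.le hβ1.le]
  linarith [mul_le_mul_of_nonneg_left hKL₀ (sub_pos.2 hβ1).le,
    mul_le_mul_of_nonneg_left hKL₁ hβ0.le]
end

section
/- Under the setup of the previous identity (π probability vector, P i ∈ [0,1], β = ∑ π i P i ∈ (0,1), children distributions π₀, π₁, J = 2 ∑ π i |P i - β|, entropy H with natural log), the entropy reduction satisfies H(π) - (1-β)H(π₀) - β H(π₁) ≥ J^2 / (8 * β * (1-β)). -/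
/-!
With the likelihood ratios `r₀ i = (1 - P i) / (1 - β)` and `r₁ i = P i / β`, the children are
`π₀ = π r₀` and `π₁ = π r₁`, and the entropy drop is exactly the mixture of Kullback–Leibler
divergences `(1 - β) KL(π₀ ‖ π) + β KL(π₁ ‖ π)`. Pinsker's inequality bounds each divergence below
by half the squared `ℓ¹` distance, and these distances are `S / (1 - β)` and `S / β` with
`S = J / 2`; since `1 / (1 - β) + 1 / β = 1 / (β (1 - β))` the bound follows.

Pinsker's inequality itself comes from the pointwise bound `3 (t - 1)² ≤ 2 (t + 2) klFun t`
combined with the Cauchy–Schwarz inequality for the weights `q i (r i + 2)`, whose total is `3`.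
-/

open Finset InformationTheory

section

open Real

lemma le_of_hasDerivAt_of_sub_mul_nonneg {f f' : ℝ → ℝ} {c t : ℝ}
    (hf : ∀ x ∈ Set.uIcc c t, HasDerivAt f (f' x) x)
    (hf' : ∀ x ∈ Set.uIcc c t, 0 ≤ (x - c) * f' x) : f c ≤ f t := by
  have hcont : ContinuousOn f (Set.uIcc c t) := fun x hx =>
    (hf x hx).continuousAt.continuousWithinAt
  rcases le_total c t with hct | htc
  · rw [Set.uIcc_of_le hct] at hf hf' hcont
    refine monotoneOn_of_hasDerivWithinAt_nonneg (convex_Icc c t) hcont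
      (fun x hx => (hf x (interior_subset hx)).hasDerivWithinAt) (fun x hx => ?_)
      (Set.left_mem_Icc.2 hct) (Set.right_mem_Icc.2 hct) hct
    rw [interior_Icc] at hx
    exact nonneg_of_mul_nonneg_right (hf' x (Set.Ioo_subset_Icc_self hx)) (sub_pos.2 hx.1)
  · rw [Set.uIcc_of_ge htc] at hf hf' hcont
    refine antitoneOn_of_hasDerivWithinAt_nonpos (convex_Icc t c) hcont
      (fun x hx => (hf x (interior_subset hx)).hasDerivWithinAt) (fun x hx => ?_)
      (Set.left_mem_Icc.2 htc) (Set.right_mem_Icc.2 htc) htc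
    rw [interior_Icc] at hx
    exact nonpos_of_mul_nonneg_right (hf' x (Set.Ioo_subset_Icc_self hx)) (sub_neg.2 hx.2)

lemma monotoneOn_add_one_mul_log_sub_two_mul_sub_one :
    MonotoneOn (fun t => (t + 1) * log t - 2 * (t - 1)) (Set.Ioi 0) := by
  have hderiv : ∀ x ∈ Set.Ioi (0 : ℝ), HasDerivAt (fun t => (t + 1) * log t - 2 * (t - 1))
      (log x + (x + 1) * x⁻¹ - 2) x := fun x hx => by
    refine (((hasDerivAt_id' x).add_const 1).mul (hasDerivAt_log (ne_of_gt hx))).sub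
      (((hasDerivAt_id' x).sub_const 1).const_mul 2) |>.congr_deriv ?_
    ring
  refine monotoneOn_of_hasDerivWithinAt_nonneg (convex_Ioi 0)
    (fun x hx => (hderiv x hx).continuousAt.continuousWithinAt)
    (fun x hx => (hderiv x (interior_subset hx)).hasDerivWithinAt) (fun x hx => ?_)
  rw [interior_Ioi] at hx
  have hx0 : (0 : ℝ) < x := hx
  have hinv : (x + 1) * x⁻¹ = 1 + x⁻¹ := by field_simp
  linarith [one_sub_inv_le_log_of_pos hx0]

lemma three_mul_sub_one_sq_le_two_mul_add_two_mul_klFun {t : ℝ} (ht : 0 ≤ t) :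
    3 * (t - 1) ^ 2 ≤ 2 * (t + 2) * klFun t := by
  rcases ht.eq_or_lt with rfl | ht
  · norm_num [klFun_zero]
  set g : ℝ → ℝ := fun x => 2 * (x + 2) * klFun x - 3 * (x - 1) ^ 2
  set φ : ℝ → ℝ := fun x => (x + 1) * log x - 2 * (x - 1)
  have hpos : ∀ x ∈ Set.uIcc 1 t, 0 < x := fun x hx =>
    lt_of_lt_of_le (lt_min one_pos ht) hx.1
  have hderiv : ∀ x ∈ Set.uIcc 1 t, HasDerivAt g (4 * φ x) x := fun x hx => by
    refine (((hasDerivAt_id' x).add_const 2).const_mul 2).mul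
      (hasDerivAt_klFun (hpos x hx).ne') |>.sub
      ((((hasDerivAt_id' x).sub_const 1).pow 2).const_mul 3) |>.congr_deriv ?_
    simp only [φ, klFun_apply]
    ring
  -- `φ` is increasing and vanishes at `1`, so `g' = 4 φ` has the sign of `x - 1`.
  have hsign : ∀ x ∈ Set.uIcc 1 t, 0 ≤ (x - 1) * (4 * φ x) := fun x hx => by
    have hφ := monotoneOn_add_one_mul_log_sub_two_mul_sub_one
    have hφ1 : φ 1 = 0 := by simp [φ]
    rcases le_total 1 x with h1x | hx1
    · have := hφ (Set.mem_Ioi.2 one_pos) (Set.mem_Ioi.2 (hpos x hx)) h1x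
      simp only [φ] at hφ1 this ⊢
      nlinarith
    · have := hφ (Set.mem_Ioi.2 (hpos x hx)) (Set.mem_Ioi.2 one_pos) hx1
      simp only [φ] at hφ1 this ⊢
      nlinarith
  have := le_of_hasDerivAt_of_sub_mul_nonneg hderiv hsign
  simp only [g, klFun_one] at this
  linarith

theorem sq_sum_mul_abs_sub_one_le_two_mul_sum_mul_klFun {ι : Type*} [Fintype ι] {q r : ι → ℝ}
    (hq : ∀ i, 0 ≤ q i) (hr : ∀ i, 0 ≤ r i) (hq1 : ∑ i, q i = 1) (hqr : ∑ i, q i * r i = 1) :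
    (∑ i, q i * |r i - 1|) ^ 2 ≤ 2 * ∑ i, q i * klFun (r i) := by
  have hweights : ∑ i, q i * (r i + 2) = 3 := by
    simp only [mul_add, sum_add_distrib, ← sum_mul, hq1, hqr]
    norm_num
  have hcs : (∑ i, q i * |r i - 1|) ^ 2
      ≤ (∑ i, q i * (r i + 2)) * ∑ i, q i * ((r i - 1) ^ 2 / (r i + 2)) := by
    refine sum_sq_le_sum_mul_sum_of_sq_le_mul _ (fun i _ => mul_nonneg (hq i) (by linarith [hr i]))
      (fun i _ => mul_nonneg (hq i) (div_nonneg (sq_nonneg _) (by linarith [hr i])))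
      (fun i _ => le_of_eq ?_)
    have : r i + 2 ≠ 0 := by linarith [hr i]
    field_simp
    rw [sq_abs]
  have hpointwise : ∀ i, q i * ((r i - 1) ^ 2 / (r i + 2)) ≤ 2 / 3 * (q i * klFun (r i)) :=
    fun i => by
      have h := three_mul_sub_one_sq_le_two_mul_add_two_mul_klFun (hr i)
      rw [mul_left_comm]
      refine mul_le_mul_of_nonneg_left ?_ (hq i)
      rw [div_le_iff₀ (by linarith [hr i])]
      linarith
  calc (∑ i, q i * |r i - 1|) ^ 2
      ≤ 3 * ∑ i, q i * ((r i - 1) ^ 2 / (r i + 2)) := hweights ▸ hcs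
    _ ≤ 3 * ∑ i, 2 / 3 * (q i * klFun (r i)) :=
        mul_le_mul_of_nonneg_left (sum_le_sum fun i _ => hpointwise i) (by norm_num)
    _ = 2 * ∑ i, q i * klFun (r i) := by rw [← mul_sum]; ring

lemma negMulLog_sub_mixture_eq_mul_klFun {y a b w₀ w₁ : ℝ} (hw : w₀ + w₁ = 1)
    (hab : w₀ * a + w₁ * b = 1) :
    negMulLog y - w₀ * negMulLog (y * a) - w₁ * negMulLog (y * b)
      = y * (w₀ * klFun a + w₁ * klFun b) := by
  rw [negMulLog_mul, negMulLog_mul]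
  simp only [negMulLog, klFun_apply]
  linear_combination (y * (1 + log y)) * hab - y * hw

end

theorem sum_negMulLog_sub_split_eq_sum_mul_klFun {ι : Type*} [Fintype ι] (π P : ι → ℝ) {β : ℝ}
    (hβ0 : β ≠ 0) (hβ1 : 1 - β ≠ 0) :
    (∑ i, Real.negMulLog (π i))
        - (1 - β) * (∑ i, Real.negMulLog (π i * (1 - P i) / (1 - β)))
        - β * (∑ i, Real.negMulLog (π i * P i / β))
      = (1 - β) * ∑ i, π i * klFun ((1 - P i) / (1 - β)) + β * ∑ i, π i * klFun (P i / β) := by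
  simp only [mul_sum, ← sum_sub_distrib, ← sum_add_distrib]
  refine sum_congr rfl fun i _ => ?_
  rw [mul_div_assoc, mul_div_assoc, negMulLog_sub_mixture_eq_mul_klFun (sub_add_cancel 1 β)]
  · ring
  · field_simp
    ring

theorem sq_sum_mul_abs_sub_le_two_mul_sq_mul_sum_mul_klFun {ι : Type*} [Fintype ι] {q x : ι → ℝ}
    {c : ℝ} (hc : 0 < c) (hq : ∀ i, 0 ≤ q i) (hx : ∀ i, 0 ≤ x i) (hq1 : ∑ i, q i = 1)
    (hqx : ∑ i, q i * x i = c) :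
    (∑ i, q i * |x i - c|) ^ 2 ≤ 2 * c ^ 2 * ∑ i, q i * klFun (x i / c) := by
  have hratio : ∑ i, q i * (x i / c) = 1 := by
    simp only [mul_div_assoc', ← sum_div, hqx, div_self hc.ne']
  have hdev : ∑ i, q i * |x i / c - 1| = (∑ i, q i * |x i - c|) / c := by
    simp only [sum_div]
    refine sum_congr rfl fun i _ => ?_
    rw [div_sub_one hc.ne', abs_div, abs_of_pos hc, mul_div_assoc]
  have h := sq_sum_mul_abs_sub_one_le_two_mul_sum_mul_klFun hq
    (fun i => div_nonneg (hx i) hc.le) hq1 hratio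
  rw [hdev, div_pow, div_le_iff₀ (by positivity)] at h
  linarith

theorem entropy_reduction_lower_bound_general (k : ℕ)
    (π P : Fin k → ℝ) (hπ : ∀ i, 0 ≤ π i) (hπsum : ∑ i, π i = 1)
    (hP0 : ∀ i, 0 ≤ P i) (hP1 : ∀ i, P i ≤ 1)
    (β J : ℝ) (hβ : β = ∑ i, π i * P i) (hβ0 : 0 < β) (hβ1 : β < 1)
    (hJ : J = 2 * ∑ i, π i * |P i - β|) :
    J ^ 2 / (8 * β * (1 - β)) ≤
      (∑ i, Real.negMulLog (π i))
        - (1 - β) * (∑ i, Real.negMulLog (π i * (1 - P i) / (1 - β)))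
        - β * (∑ i, Real.negMulLog (π i * P i / β)) := by
  have h1β : 0 < 1 - β := sub_pos.2 hβ1
  have hsum₀ : ∑ i, π i * (1 - P i) = 1 - β := by
    simp only [mul_one_sub, sum_sub_distrib, hπsum, hβ]
  have hpinsker₀ := sq_sum_mul_abs_sub_le_two_mul_sq_mul_sum_mul_klFun h1β hπ
    (fun i => sub_nonneg.2 (hP1 i)) hπsum hsum₀
  have hpinsker₁ := sq_sum_mul_abs_sub_le_two_mul_sq_mul_sum_mul_klFun hβ0 hπ hP0 hπsum hβ.symm
  have hdev₀ : ∀ i, |1 - P i - (1 - β)| = |P i - β| := fun i => by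
    rw [sub_sub_sub_cancel_left, abs_sub_comm]
  simp only [hdev₀] at hpinsker₀
  rw [sum_negMulLog_sub_split_eq_sum_mul_klFun π P hβ0.ne' h1β.ne', hJ,
    div_le_iff₀ (by positivity)]
  -- `1 / (β (1 - β)) = 1 / (1 - β) + 1 / β` splits the bound between the two children.
  nlinarith [mul_le_mul_of_nonneg_left hpinsker₀ hβ0.le, mul_le_mul_of_nonneg_left hpinsker₁ h1β.le]

theorem entropy_reduction_lower_bound (k : ℕ) (hk : 1 ≤ k)
    (π P : Fin k → ℝ) (hπ : ∀ i, 0 ≤ π i) (hπsum : ∑ i, π i = 1)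
    (hP0 : ∀ i, 0 ≤ P i) (hP1 : ∀ i, P i ≤ 1)
    (β J : ℝ) (hβ : β = ∑ i, π i * P i) (hβ0 : 0 < β) (hβ1 : β < 1)
    (hJ : J = 2 * ∑ i, π i * |P i - β|) :
    J ^ 2 / (8 * β * (1 - β)) ≤
      (∑ i, Real.negMulLog (π i))
        - (1 - β) * (∑ i, Real.negMulLog (π i * (1 - P i) / (1 - β)))
        - β * (∑ i, Real.negMulLog (π i * P i / β)) :=
  entropy_reduction_lower_bound_general k π P hπ hπsum hP0 hP1 β J hβ hβ0 hβ1 hJ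
end

section
/- Let k ≥ 1, π : Fin k → ℝ nonnegative with ∑ π i = 1, P : Fin k → ℝ with 0 ≤ P i ≤ 1, and β = ∑ π i * P i. Then ∑ i, π i * |P i - β| ≤ 2 * β * (1 - β). -/
theorem mean_abs_deviation_bound (k : ℕ) (hk : 1 ≤ k)
    (π P : Fin k → ℝ) (hπ : ∀ i, 0 ≤ π i) (hπsum : ∑ i, π i = 1)
    (hP0 : ∀ i, 0 ≤ P i) (hP1 : ∀ i, P i ≤ 1) :
    ∑ i, π i * |P i - ∑ j, π j * P j| ≤
      2 * (∑ j, π j * P j) * (1 - ∑ j, π j * P j) := by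
  set β : ℝ := ∑ j, π j * P j with hβ
  have hβ0 : 0 ≤ β := Finset.sum_nonneg fun i _ => mul_nonneg (hπ i) (hP0 i)
  have hβ1 : β ≤ 1 := by
    calc β ≤ ∑ j, π j := Finset.sum_le_sum fun i _ =>
            mul_le_of_le_one_right (hπ i) (hP1 i)
    _ = 1 := hπsum
  have hzero : ∑ i, π i * (P i - β) = 0 := by
    have : ∑ i, π i * (P i - β) = (∑ i, π i * P i) - β * ∑ i, π i := by
      rw [Finset.mul_sum, ← Finset.sum_sub_distrib]
      congr 1; ext i; ring
    rw [this, hπsum]; ring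
  have habs : ∑ i, π i * |P i - β| = 2 * ∑ i, π i * max (P i - β) 0 := by
    have : ∀ i : Fin k, π i * |P i - β| =
        2 * (π i * max (P i - β) 0) - π i * (P i - β) := by
      intro i
      rcases le_or_gt β (P i) with h | h
      · rw [abs_of_nonneg (by linarith), max_eq_left (by linarith)]; ring
      · rw [abs_of_neg (by linarith), max_eq_right (by linarith)]; ring
    rw [Finset.sum_congr rfl fun i _ => this i, Finset.sum_sub_distrib, hzero,
      ← Finset.mul_sum]; ring
  rw [habs]
  have hbound : ∑ i, π i * max (P i - β) 0 ≤ ∑ i, π i * (P i * (1 - β)) := by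
    apply Finset.sum_le_sum
    intro i _
    apply mul_le_mul_of_nonneg_left _ (hπ i)
    apply max_le
    · nlinarith [hP1 i, hβ0]
    · exact mul_nonneg (hP0 i) (by linarith)
  have : ∑ i, π i * (P i * (1 - β)) = β * (1 - β) := by
    have e : (∑ i, π i * (P i * (1 - β))) = ∑ i, (π i * P i) * (1 - β) :=
      Finset.sum_congr rfl fun i _ => by ring
    rw [e, ← Finset.sum_mul]
  nlinarith [hbound]
end
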